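/- arXiv:math/0612762 — 4 statements merged into one kernel-verified Lean document; each statement's English description precedes it below -/
import Mathlib

section
/- Let a group G act on a simple graph X by graph automorphisms, let v be a vertex of X, and let S be a generating set for G. Suppose (1) every connected component of X contains a vertex of the orbit G·v, and (2) for every s ∈ S and every s ∈ S⁻¹, the vertices v and s·v lie in the same connected component of X. Then X is connected. -/
/-- The connectivity trick: if every component of `X` meets the orbit
`G • v` and for every generator `s` (and its inverse) `v` and `s • v` are in the
same component, then `X` is connected. -/
theorem stmt0 {G V : Type*} [Group G] [MulAction G V] (X : SimpleGraph V)
    (hact : ∀ (g : G) (x y : V), X.Adj x y → X.Adj (g • x) (g • y))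
    (v : V) (S : Set G) (hS : Subgroup.closure S = ⊤)
    (h1 : ∀ w : V, ∃ g : G, X.Reachable (g • v) w)
    (h2 : ∀ s ∈ S, X.Reachable v (s • v) ∧ X.Reachable v (s⁻¹ • v)) :
    X.Connected := by
  have hmap : ∀ (g : G) (x y : V), X.Reachable x y → X.Reachable (g • x) (g • y) := by
    intro g x y h
    exact h.map ⟨fun z => g • z, fun h => hact g _ _ h⟩
  have key : ∀ g : G, X.Reachable v (g • v) := by
    intro g
    have hg : g ∈ Subgroup.closure S := hS ▸ Subgroup.mem_top g
    induction hg using Subgroup.closure_induction with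
    | mem s hs => exact (h2 s hs).1
    | one => simpa using SimpleGraph.Reachable.refl v
    | mul a b _ _ ha hb =>
        refine ha.trans ?_
        have := hmap a _ _ hb
        simpa [mul_smul] using this
    | inv a ha hrec =>
        have := hmap a⁻¹ _ _ hrec
        simp only [inv_smul_smul] at this
        exact this.symm
  rw [SimpleGraph.connected_iff]
  refine ⟨fun x y => ?_, ⟨v⟩⟩
  obtain ⟨g, hg⟩ := h1 x
  obtain ⟨g', hg'⟩ := h1 y
  exact hg.symm.trans (((key g).symm.trans (key g')).trans hg')
end

section
/- Let G act on a simple graph X by automorphisms and act transitively on its vertex set, let v be a vertex, and suppose X is connected. If T is a subset of G such that for every vertex w adjacent to v there exists t ∈ T with t·v = w, then G is generated by T together with the stabilizer of v. -/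
/-- If `G` acts on a connected graph `X` by automorphisms, transitively
on vertices, and `T ⊆ G` carries `v` to each of its neighbors, then `G` is generated
by `T` together with the stabilizer of `v`. -/
theorem stmt5 {G V : Type*} [Group G] [MulAction G V] (X : SimpleGraph V)
    (hact : ∀ (g : G) (x y : V), X.Adj x y → X.Adj (g • x) (g • y))
    (v : V) (htrans : ∀ w : V, ∃ g : G, g • v = w)
    (hconn : X.Connected)
    (T : Set G) (hT : ∀ w : V, X.Adj v w → ∃ t ∈ T, t • v = w) :
    Subgroup.closure (T ∪ (MulAction.stabilizer G v : Set G)) = ⊤ := by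
  set H := Subgroup.closure (T ∪ (MulAction.stabilizer G v : Set G)) with hH
  have hTH : ∀ t ∈ T, t ∈ H := fun t ht => Subgroup.subset_closure (Or.inl ht)
  have hSH : ∀ s : G, s • v = v → s ∈ H := fun s hs =>
    Subgroup.subset_closure (Or.inr hs)
  have key : ∀ (a b : V) (p : X.Walk a b) (g k : G),
      g • v = a → k • v = b → k ∈ H → g ∈ H := by
    intro a b p
    induction p with
    | nil =>
      intro g k hg hk hkH
      have hstab : (k⁻¹ * g) • v = v := by rw [mul_smul, hg, ← hk, inv_smul_smul]
      have : g = k * (k⁻¹ * g) := by group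
      rw [this]
      exact H.mul_mem hkH (hSH _ hstab)
    | cons h _ ih =>
      rename_i a u b _
      intro g k hg hk hkH
      obtain ⟨m, hm⟩ := htrans u
      have hmH : m ∈ H := ih m k hm hk hkH
      have hadj : X.Adj v ((g⁻¹ * m) • v) := by
        have := hact g⁻¹ a u h
        rw [← hg, ← hm, inv_smul_smul] at this
        simpa [mul_smul] using this
      obtain ⟨t, htT, htv⟩ := hT _ hadj
      have hstab : (t⁻¹ * (g⁻¹ * m)) • v = v := by
        rw [mul_smul, ← htv, inv_smul_smul]
      have : g = m * (t⁻¹ * (g⁻¹ * m))⁻¹ * t⁻¹ := by group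
      rw [this]
      exact H.mul_mem (H.mul_mem hmH (H.inv_mem (hSH _ hstab))) (H.inv_mem (hTH t htT))
  rw [eq_top_iff]
  intro g _
  exact key (g • v) v (hconn (g • v) v).some g 1 rfl (one_smul G v) H.one_mem
end

section
/- Let a group G act on a simple graph X by automorphisms, let v be a vertex fixed by every element of a subset S₀ of a generating set S of G (and by the inverses of elements of S₀). If for each s ∈ (S ∖ S₀) ∪ (S ∖ S₀)⁻¹ the vertices v and s·v lie in the same connected component of X, and every connected component of X meets the orbit G·v, then X is connected. -/
/-- The connectivity trick when a subset `S₀` of the generating set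
fixes the basepoint `v`: if every generator outside `S₀` (and its inverse) moves `v`
within its connected component and every component meets the orbit of `v`, then `X`
is connected. -/
theorem stmt11 {G V : Type*} [Group G] [MulAction G V] (X : SimpleGraph V)
    (hact : ∀ (g : G) (x y : V), X.Adj x y → X.Adj (g • x) (g • y))
    (v : V) (S S₀ : Set G) (hS₀ : S₀ ⊆ S) (hS : Subgroup.closure S = ⊤)
    (hfix : ∀ s ∈ S₀, s • v = v ∧ s⁻¹ • v = v)
    (hmove : ∀ s ∈ S \ S₀, X.Reachable v (s • v) ∧ X.Reachable v (s⁻¹ • v))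
    (horb : ∀ w : V, ∃ g : G, X.Reachable (g • v) w) :
    X.Connected := by
  have hmap : ∀ (g : G) (x y : V), X.Reachable x y → X.Reachable (g • x) (g • y) := by
    intro g x y ⟨w⟩
    induction w with
    | nil => exact SimpleGraph.Reachable.refl _
    | cons h _ ih => exact (SimpleGraph.Adj.reachable (hact g _ _ h)).trans ih
  have key : ∀ g : G, X.Reachable v (g • v) := by
    intro g
    have hg : g ∈ Subgroup.closure S := by rw [hS]; trivial
    induction hg using Subgroup.closure_induction with
    | mem s hs =>
      by_cases h0 : s ∈ S₀
      · rw [(hfix s h0).1]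
      · exact (hmove s ⟨hs, h0⟩).1
    | one => rw [one_smul]
    | mul a b _ _ ha hb =>
      refine ha.trans ?_
      have := hmap a _ _ hb
      rwa [smul_smul] at this
    | inv a _ ha =>
      have := hmap a⁻¹ _ _ ha
      rw [smul_smul, inv_mul_cancel, one_smul] at this
      exact this.symm
  rw [SimpleGraph.connected_iff]
  constructor
  · intro x y

    obtain ⟨g, hg⟩ := horb x
    obtain ⟨h, hh⟩ := horb y
    exact hg.symm.trans (((key g).symm.trans (key h)).trans hh)
  · exact ⟨v⟩
end

section
/- Let a group G act on a simple graph X by automorphisms, let v be a vertex, and suppose (i) the quotient graph X/G (whose vertices are G-orbits of vertices, with two orbits adjacent if some representatives are adjacent in X) is connected, (ii) every edge of X/G lifts: whenever the orbits of vertices x and y are adjacent in X/G, there exists g ∈ G with g·y adjacent to x in X, and (iii) for every element s of a generating set S of G and its inverse, v and s·v lie in the same connected component of X. Then X is connected. -/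
/-- The quotient graph `X/G`: vertices are `G`-orbits of vertices of `X`, with two
distinct orbits adjacent iff they have adjacent representatives. -/
def orbitQuotientGraph (G : Type*) {V : Type*} [Group G] [MulAction G V]
    (X : SimpleGraph V) : SimpleGraph (Quotient (MulAction.orbitRel G V)) where
  Adj a b := a ≠ b ∧ ∃ x y : V,
    Quotient.mk (MulAction.orbitRel G V) x = a ∧
      Quotient.mk (MulAction.orbitRel G V) y = b ∧ X.Adj x y
  symm := ⟨by
    rintro a b ⟨hab, x, y, hx, hy, hxy⟩
    exact ⟨hab.symm, y, x, hy, hx, hxy.symm⟩⟩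
  loopless := ⟨by
    rintro a ⟨hab, -⟩
    exact hab rfl⟩

/-- If the quotient graph `X/G` is connected, every edge of `X/G`
lifts to an edge of `X`, and for every generator `s` (and its inverse) `v` and
`s • v` lie in the same component of `X`, then `X` is connected. -/
theorem stmt12 {G V : Type*} [Group G] [MulAction G V] (X : SimpleGraph V)
    (hact : ∀ (g : G) (x y : V), X.Adj x y → X.Adj (g • x) (g • y))
    (v : V) (S : Set G) (hS : Subgroup.closure S = ⊤)
    (hq : (orbitQuotientGraph G X).Connected)
    (hlift : ∀ x y : V,
      (orbitQuotientGraph G X).Adj (Quotient.mk (MulAction.orbitRel G V) x)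
        (Quotient.mk (MulAction.orbitRel G V) y) → ∃ g : G, X.Adj x (g • y))
    (hgen : ∀ s ∈ S, X.Reachable v (s • v) ∧ X.Reachable v (s⁻¹ • v)) :
    X.Connected := by
  -- the action maps reachability
  have hr : ∀ (g : G) (x y : V), X.Reachable x y → X.Reachable (g • x) (g • y) := by
    intro g x y h
    exact h.map ⟨fun z => g • z, fun h => hact g _ _ h⟩
  -- every g • v is reachable from v
  have hv : ∀ g : G, X.Reachable v (g • v) := by
    intro g
    have hg : g ∈ Subgroup.closure S := hS ▸ Subgroup.mem_top g
    induction hg using Subgroup.closure_induction with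
    | mem s hs => exact (hgen s hs).1
    | one => rw [one_smul]
    | mul a b _ _ ha hb =>
        have := hr a _ _ hb
        rw [smul_smul] at this
        exact ha.trans this
    | inv a _ ha =>
        have := hr a⁻¹ _ _ ha
        rw [smul_smul, inv_mul_cancel, one_smul] at this
        exact this.symm
  have horb : ∀ (g : G) (x : V), X.Reachable v x → X.Reachable v (g • x) := fun g x h =>
    (hv g).trans (hr g _ _ h)
  have step : ∀ a b : Quotient (MulAction.orbitRel G V),
      (orbitQuotientGraph G X).Adj a b →
      (∀ x : V, Quotient.mk (MulAction.orbitRel G V) x = a → X.Reachable v x) →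
      (∀ y : V, Quotient.mk (MulAction.orbitRel G V) y = b → X.Reachable v y) := by
    intro a b hab ha y hy
    have hao : Quotient.mk (MulAction.orbitRel G V) a.out = a := Quotient.out_eq a
    have hbo : Quotient.mk (MulAction.orbitRel G V) b.out = b := Quotient.out_eq b
    rw [← hao, ← hbo] at hab
    obtain ⟨g, hg⟩ := hlift _ _ hab
    have h1 : X.Reachable v (g • b.out) := (ha a.out hao).trans ⟨SimpleGraph.Walk.cons hg SimpleGraph.Walk.nil⟩
    have h2 : X.Reachable v b.out := by
      have := horb g⁻¹ _ h1
      rwa [smul_smul, inv_mul_cancel, one_smul] at this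
    have : (MulAction.orbitRel G V).r y b.out := Quotient.exact (hy.trans hbo.symm)
    obtain ⟨g', hg'⟩ := this
    rw [← hg']
    exact horb g' _ h2
  have walkstep : ∀ {a b : Quotient (MulAction.orbitRel G V)},
      (orbitQuotientGraph G X).Walk a b →
      (∀ x : V, Quotient.mk (MulAction.orbitRel G V) x = a → X.Reachable v x) →
      (∀ y : V, Quotient.mk (MulAction.orbitRel G V) y = b → X.Reachable v y) := by
    intro a b w
    induction w with
    | nil => exact fun h => h
    | cons h p ih => exact fun ha => ih (step _ _ h ha)
  have key : ∀ x : V, X.Reachable v x := by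
    intro x
    obtain ⟨w⟩ := hq (Quotient.mk (MulAction.orbitRel G V) v)
      (Quotient.mk (MulAction.orbitRel G V) x)
    refine walkstep w ?_ x rfl
    intro y hy
    obtain ⟨g, hg⟩ : (MulAction.orbitRel G V).r y v := Quotient.exact hy
    rw [← hg]
    exact horb g v (SimpleGraph.Reachable.refl v)
  have : Nonempty V := ⟨v⟩
  rw [SimpleGraph.connected_iff]
  exact ⟨fun x y => (key x).symm.trans (key y), this⟩
end
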